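/- Suppose that C and D are split chain complexes. Then the map sending the chain homotopy class of a chain homotopy equivalence f : C → D to the pair of chain homotopy classes of its restrictions (f|_{C^ℓ}, f|_{C^u}) is a well-defined bijection chEq(C, D) ≅ chEq(C^ℓ, D^ℓ) × chEq(C^u, D^u). -/

import Mathlib

open CategoryTheory Limits

variable {R : Type} [Ring R]

/-- Admissibility: bounded between 0 and n, finitely generated free in each degree. -/
def IsAdmissible (n : ℕ) (C : ChainComplex (ModuleCat R) ℕ) : Prop :=
  (∀ i, n < i → IsZero (C.X i)) ∧
    (∀ i, Module.Finite R (C.X i)) ∧ (∀ i, Module.Free R (C.X i))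

/-- The lower half `C^ℓ` of a chain complex. -/
noncomputable def lowerHalf (n : ℕ) (C : ChainComplex (ModuleCat R) ℕ) :
    ChainComplex (ModuleCat R) ℕ :=
  ChainComplex.of
    (fun i => if 2 * i < n then C.X i else ModuleCat.of R PUnit)
    (fun i =>
      if h : 2 * (i + 1) < n then
        eqToHom (if_pos h) ≫ C.d (i + 1) i ≫ eqToHom (if_pos (by omega : 2 * i < n)).symm
      else 0)
    (fun i => by
      by_cases h : 2 * (i + 1 + 1) < n
      · simp only [dif_pos h, dif_pos (show 2 * (i + 1) < n by omega)]
        simp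
      · simp only [dif_neg h, zero_comp])

/-- The upper half `C^u` of a chain complex. -/
noncomputable def upperHalf (n : ℕ) (C : ChainComplex (ModuleCat R) ℕ) :
    ChainComplex (ModuleCat R) ℕ :=
  ChainComplex.of
    (fun i => if n < 2 * i then C.X i else ModuleCat.of R PUnit)
    (fun i =>
      if h : n < 2 * i then
        eqToHom (if_pos (by omega : n < 2 * (i + 1))) ≫ C.d (i + 1) i ≫ eqToHom (if_pos h).symm
      else 0)
    (fun i => by
      by_cases h : n < 2 * i
      · simp only [dif_pos h, dif_pos (show n < 2 * (i + 1) by omega)]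
        simp
      · simp only [dif_neg h, comp_zero])

/-- A chain complex splits if `C_{n/2} = 0` (n even) or `d_{⌈n/2⌉} = 0` (n odd). -/
def Splits (n : ℕ) (C : ChainComplex (ModuleCat R) ℕ) : Prop :=
  if Even n then IsZero (C.X (n / 2)) else C.d (n / 2 + 1) (n / 2) = 0

/-- The restriction of a chain map to the lower halves. -/
noncomputable def lowerMap (n : ℕ) {C D : ChainComplex (ModuleCat R) ℕ} (f : C ⟶ D) :
    lowerHalf n C ⟶ lowerHalf n D where
  f i :=
    if h : 2 * i < n then
      eqToHom (if_pos h) ≫ f.f i ≫ eqToHom (if_pos h).symm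
    else 0
  comm' := by
    rintro i j (rfl : j + 1 = i)
    show _ ≫ (lowerHalf n D).d (j + 1) j = (lowerHalf n C).d (j + 1) j ≫ _
    by_cases h : 2 * (j + 1) < n
    · simp only [dif_pos h, dif_pos (show 2 * j < n by omega)]
      simp [lowerHalf, h]
    · simp [dif_neg h, lowerHalf]

/-- The restriction of a chain map to the upper halves. -/
noncomputable def upperMap (n : ℕ) {C D : ChainComplex (ModuleCat R) ℕ} (f : C ⟶ D) :
    upperHalf n C ⟶ upperHalf n D where
  f i :=
    if h : n < 2 * i then
      eqToHom (if_pos h) ≫ f.f i ≫ eqToHom (if_pos h).symm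
    else 0
  comm' := by
    rintro i j (rfl : j + 1 = i)
    show _ ≫ (upperHalf n D).d (j + 1) j = (upperHalf n C).d (j + 1) j ≫ _
    by_cases h : n < 2 * j
    · simp only [dif_pos h, dif_pos (show n < 2 * (j + 1) by omega)]
      simp [upperHalf, h]
    · simp [dif_neg h, upperHalf]

/-- A chain map is a chain homotopy equivalence if it is the underlying map of a homotopy
equivalence, i.e. it admits a chain-homotopy inverse. -/
def IsChainHtpyEquiv {C D : ChainComplex (ModuleCat R) ℕ} (f : C ⟶ D) : Prop :=
  ∃ e : HomotopyEquiv C D, e.hom = f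

/-- The setoid of chain homotopy equivalences `C ⟶ D` up to chain homotopy. -/
def chEqSetoid (C D : ChainComplex (ModuleCat R) ℕ) :
    Setoid {f : C ⟶ D // IsChainHtpyEquiv f} where
  r f g := Nonempty (Homotopy f.1 g.1)
  iseqv :=
    ⟨fun f => ⟨Homotopy.refl f.1⟩, fun ⟨h⟩ => ⟨h.symm⟩, fun ⟨h⟩ ⟨h'⟩ => ⟨h.trans h'⟩⟩

/-- `chEq C D` is the set of chain homotopy classes of chain homotopy equivalences `C ⟶ D`. -/
def chEq (C D : ChainComplex (ModuleCat R) ℕ) : Type :=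
  Quotient (chEqSetoid C D)

/-! A split complex is the direct sum of its two halves. The inclusion `lowerIncl` of the lower
half and the projection `upperProj` onto the upper half are chain maps for every complex, and
splitting makes `lowerProj` and `upperIncl` chain maps as well, with
`lowerProj ≫ lowerIncl + upperProj ≫ upperIncl = 𝟙`. No degree carries both halves, so every
chain map `C ⟶ D` is diagonal for these decompositions. Hence `f ↦ (lowerMap f, upperMap f)`,
which is `f ↦ (lowerIncl ≫ f ≫ lowerProj, upperIncl ≫ f ≫ upperProj)`, and
`(g, h) ↦ lowerProj ≫ g ≫ lowerIncl + upperProj ≫ h ≫ upperIncl` are mutually inverse; both are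
built from composition and addition, so they respect chain homotopies and homotopy
equivalences. -/

section Halves

variable {n : ℕ} {C D E : ChainComplex (ModuleCat R) ℕ}

lemma lowerHalf_X_of_lt (C : ChainComplex (ModuleCat R) ℕ) {i : ℕ} (h : 2 * i < n) :
    (lowerHalf n C).X i = C.X i := if_pos h

lemma upperHalf_X_of_lt (C : ChainComplex (ModuleCat R) ℕ) {i : ℕ} (h : n < 2 * i) :
    (upperHalf n C).X i = C.X i := if_pos h

lemma isZero_lowerHalf_X (C : ChainComplex (ModuleCat R) ℕ) {i : ℕ} (h : n ≤ 2 * i) :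
    IsZero ((lowerHalf n C).X i) := by
  rw [show (lowerHalf n C).X i = ModuleCat.of R PUnit from if_neg (by omega)]
  exact ModuleCat.isZero_of_subsingleton _

lemma isZero_upperHalf_X (C : ChainComplex (ModuleCat R) ℕ) {i : ℕ} (h : 2 * i ≤ n) :
    IsZero ((upperHalf n C).X i) := by
  rw [show (upperHalf n C).X i = ModuleCat.of R PUnit from if_neg (by omega)]
  exact ModuleCat.isZero_of_subsingleton _

lemma lowerHalf_d_of_lt {i : ℕ} (h : 2 * (i + 1) < n) :
    (lowerHalf n C).d (i + 1) i =
      eqToHom (lowerHalf_X_of_lt C h) ≫ C.d (i + 1) i ≫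
        eqToHom (lowerHalf_X_of_lt C (by omega : 2 * i < n)).symm := by
  simp [lowerHalf, ChainComplex.of_d, dif_pos h]

lemma upperHalf_d_of_lt {i : ℕ} (h : n < 2 * i) :
    (upperHalf n C).d (i + 1) i =
      eqToHom (upperHalf_X_of_lt C (by omega : n < 2 * (i + 1))) ≫ C.d (i + 1) i ≫
        eqToHom (upperHalf_X_of_lt C h).symm := by
  simp [upperHalf, ChainComplex.of_d, dif_pos h]

lemma Splits.isZero_X (hC : Splits n C) {i : ℕ} (h : 2 * i = n) : IsZero (C.X i) := by
  rw [Splits, if_pos ⟨i, by omega⟩, show n / 2 = i by omega] at hC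
  exact hC

lemma Splits.d_eq_zero (hC : Splits n C) {i : ℕ} (h₁ : 2 * i ≤ n) (h₂ : n ≤ 2 * i + 2) :
    C.d (i + 1) i = 0 := by
  obtain h | h | h : n = 2 * i ∨ n = 2 * i + 1 ∨ n = 2 * (i + 1) := by omega
  · exact (hC.isZero_X h.symm).eq_of_tgt _ _
  · rw [Splits, if_neg (by rintro ⟨k, hk⟩; omega), show n / 2 = i by omega] at hC
    exact hC
  · exact (hC.isZero_X h.symm).eq_of_src _ _

noncomputable def lowerIncl (n : ℕ) (C : ChainComplex (ModuleCat R) ℕ) : lowerHalf n C ⟶ C where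
  f i := if h : 2 * i < n then eqToHom (lowerHalf_X_of_lt C h) else 0
  comm' := by
    rintro _ i rfl
    by_cases h : 2 * (i + 1) < n
    · simp [h, lowerHalf_d_of_lt h, show 2 * i < n by omega]
    · exact (isZero_lowerHalf_X C (by omega)).eq_of_src _ _

noncomputable def upperProj (n : ℕ) (C : ChainComplex (ModuleCat R) ℕ) : C ⟶ upperHalf n C where
  f i := if h : n < 2 * i then eqToHom (upperHalf_X_of_lt C h).symm else 0
  comm' := by
    rintro _ i rfl
    by_cases h : n < 2 * i
    · simp [h, upperHalf_d_of_lt h, show n < 2 * (i + 1) by omega]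
    · exact (isZero_upperHalf_X C (by omega)).eq_of_tgt _ _

noncomputable def lowerProj (hC : Splits n C) : C ⟶ lowerHalf n C where
  f i := if h : 2 * i < n then eqToHom (lowerHalf_X_of_lt C h).symm else 0
  comm' := by
    rintro _ i rfl
    by_cases h : 2 * (i + 1) < n
    · simp [h, lowerHalf_d_of_lt h, show 2 * i < n by omega]
    · by_cases h' : 2 * i < n
      · rw [hC.d_eq_zero (by omega) (by omega)]
        simp [h]
      · exact (isZero_lowerHalf_X C (by omega)).eq_of_tgt _ _

noncomputable def upperIncl (hC : Splits n C) : upperHalf n C ⟶ C where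
  f i := if h : n < 2 * i then eqToHom (upperHalf_X_of_lt C h) else 0
  comm' := by
    rintro _ i rfl
    by_cases h : n < 2 * i
    · simp [h, upperHalf_d_of_lt h, show n < 2 * (i + 1) by omega]
    · by_cases h' : n < 2 * (i + 1)
      · rw [hC.d_eq_zero (by omega) (by omega)]
        simp [h]
      · exact (isZero_upperHalf_X C (by omega)).eq_of_src _ _

lemma lowerIncl_comp_lowerProj (hC : Splits n C) : lowerIncl n C ≫ lowerProj hC = 𝟙 _ := by
  ext i : 1
  by_cases h : 2 * i < n
  · simp [lowerIncl, lowerProj, h]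
  · exact (isZero_lowerHalf_X C (by omega)).eq_of_src _ _

lemma upperIncl_comp_upperProj (hC : Splits n C) : upperIncl hC ≫ upperProj n C = 𝟙 _ := by
  ext i : 1
  by_cases h : n < 2 * i
  · simp [upperIncl, upperProj, h]
  · exact (isZero_upperHalf_X C (by omega)).eq_of_src _ _

lemma lowerIncl_comp_comp_upperProj (f : C ⟶ D) : lowerIncl n C ≫ f ≫ upperProj n D = 0 := by
  ext i : 1
  by_cases h : 2 * i < n
  · exact (isZero_upperHalf_X D (by omega)).eq_of_tgt _ _
  · exact (isZero_lowerHalf_X C (by omega)).eq_of_src _ _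

lemma upperIncl_comp_comp_lowerProj (hC : Splits n C) (hD : Splits n D) (f : C ⟶ D) :
    upperIncl hC ≫ f ≫ lowerProj hD = 0 := by
  ext i : 1
  by_cases h : n < 2 * i
  · exact (isZero_lowerHalf_X D (by omega)).eq_of_tgt _ _
  · exact (isZero_upperHalf_X C (by omega)).eq_of_src _ _

lemma lowerIncl_comp_upperProj : lowerIncl n C ≫ upperProj n C = 0 := by
  simpa using lowerIncl_comp_comp_upperProj (n := n) (𝟙 C)

lemma upperIncl_comp_lowerProj (hC : Splits n C) : upperIncl hC ≫ lowerProj hC = 0 := by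
  simpa using upperIncl_comp_comp_lowerProj hC hC (𝟙 C)

lemma Splits.lowerProj_comp_incl_add_upperProj_comp_incl (hC : Splits n C) :
    lowerProj hC ≫ lowerIncl n C + upperProj n C ≫ upperIncl hC = 𝟙 C := by
  ext i : 1
  by_cases hl : 2 * i < n
  · simp [lowerIncl, lowerProj, upperIncl, upperProj, hl, show ¬ n < 2 * i by omega]
  by_cases hu : n < 2 * i
  · simp [lowerIncl, lowerProj, upperIncl, upperProj, hu, hl]
  · exact (hC.isZero_X (by omega)).eq_of_src _ _

lemma lowerMap_eq_incl_comp_comp_proj (hD : Splits n D) (f : C ⟶ D) :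
    lowerMap n f = lowerIncl n C ≫ f ≫ lowerProj hD := by
  ext i : 1
  by_cases h : 2 * i < n
  · simp [lowerMap, lowerIncl, lowerProj, h]
  · exact (isZero_lowerHalf_X D (by omega)).eq_of_tgt _ _

lemma upperMap_eq_incl_comp_comp_proj (hC : Splits n C) (f : C ⟶ D) :
    upperMap n f = upperIncl hC ≫ f ≫ upperProj n D := by
  ext i : 1
  by_cases h : n < 2 * i
  · simp [upperMap, upperIncl, upperProj, h]
  · exact (isZero_upperHalf_X D (by omega)).eq_of_tgt _ _

lemma lowerMap_f_of_lt (f : C ⟶ D) {i : ℕ} (h : 2 * i < n) :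
    (lowerMap n f).f i =
      eqToHom (lowerHalf_X_of_lt C h) ≫ f.f i ≫ eqToHom (lowerHalf_X_of_lt D h).symm :=
  dif_pos h

lemma upperMap_f_of_lt (f : C ⟶ D) {i : ℕ} (h : n < 2 * i) :
    (upperMap n f).f i =
      eqToHom (upperHalf_X_of_lt C h) ≫ f.f i ≫ eqToHom (upperHalf_X_of_lt D h).symm :=
  dif_pos h

lemma lowerMap_comp (f : C ⟶ D) (g : D ⟶ E) :
    lowerMap n (f ≫ g) = lowerMap n f ≫ lowerMap n g := by
  ext i : 1
  by_cases h : 2 * i < n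
  · simp [lowerMap_f_of_lt _ h]
  · exact (isZero_lowerHalf_X E (by omega)).eq_of_tgt _ _

lemma upperMap_comp (f : C ⟶ D) (g : D ⟶ E) :
    upperMap n (f ≫ g) = upperMap n f ≫ upperMap n g := by
  ext i : 1
  by_cases h : n < 2 * i
  · simp [upperMap_f_of_lt _ h]
  · exact (isZero_upperHalf_X E (by omega)).eq_of_tgt _ _

lemma lowerMap_id : lowerMap n (𝟙 C) = 𝟙 _ := by
  ext i : 1
  by_cases h : 2 * i < n
  · simp [lowerMap_f_of_lt _ h]
  · exact (isZero_lowerHalf_X C (by omega)).eq_of_tgt _ _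

lemma upperMap_id : upperMap n (𝟙 C) = 𝟙 _ := by
  ext i : 1
  by_cases h : n < 2 * i
  · simp [upperMap_f_of_lt _ h]
  · exact (isZero_upperHalf_X C (by omega)).eq_of_tgt _ _

noncomputable def Homotopy.restrictLower (hD : Splits n D) {f g : C ⟶ D} (H : Homotopy f g) :
    Homotopy (lowerMap n f) (lowerMap n g) := by
  simp only [lowerMap_eq_incl_comp_comp_proj hD]
  exact (H.compRight _).compLeft _

noncomputable def Homotopy.restrictUpper (hC : Splits n C) {f g : C ⟶ D} (H : Homotopy f g) :
    Homotopy (upperMap n f) (upperMap n g) := by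
  simp only [upperMap_eq_incl_comp_comp_proj hC]
  exact (H.compRight _).compLeft _

noncomputable def HomotopyEquiv.restrictLower (hC : Splits n C) (hD : Splits n D)
    (e : HomotopyEquiv C D) : HomotopyEquiv (lowerHalf n C) (lowerHalf n D) where
  hom := lowerMap n e.hom
  inv := lowerMap n e.inv
  homotopyHomInvId := by
    simpa only [← lowerMap_comp, lowerMap_id] using e.homotopyHomInvId.restrictLower hC
  homotopyInvHomId := by
    simpa only [← lowerMap_comp, lowerMap_id] using e.homotopyInvHomId.restrictLower hD

noncomputable def HomotopyEquiv.restrictUpper (hC : Splits n C) (hD : Splits n D)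
    (e : HomotopyEquiv C D) : HomotopyEquiv (upperHalf n C) (upperHalf n D) where
  hom := upperMap n e.hom
  inv := upperMap n e.inv
  homotopyHomInvId := by
    simpa only [← upperMap_comp, upperMap_id] using e.homotopyHomInvId.restrictUpper hC
  homotopyInvHomId := by
    simpa only [← upperMap_comp, upperMap_id] using e.homotopyInvHomId.restrictUpper hD

lemma isChainHtpyEquiv_lowerMap (hC : Splits n C) (hD : Splits n D) {f : C ⟶ D}
    (hf : IsChainHtpyEquiv f) : IsChainHtpyEquiv (lowerMap n f) := by
  obtain ⟨e, rfl⟩ := hf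
  exact ⟨e.restrictLower hC hD, rfl⟩

lemma isChainHtpyEquiv_upperMap (hC : Splits n C) (hD : Splits n D) {f : C ⟶ D}
    (hf : IsChainHtpyEquiv f) : IsChainHtpyEquiv (upperMap n f) := by
  obtain ⟨e, rfl⟩ := hf
  exact ⟨e.restrictUpper hC hD, rfl⟩

noncomputable def mapOfHalves (hC : Splits n C) (hD : Splits n D)
    (g : lowerHalf n C ⟶ lowerHalf n D) (h : upperHalf n C ⟶ upperHalf n D) : C ⟶ D :=
  lowerProj hC ≫ g ≫ lowerIncl n D + upperProj n C ≫ h ≫ upperIncl hD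

section MapOfHalves

variable (hC : Splits n C) (hD : Splits n D) (hE : Splits n E)

lemma lowerMap_mapOfHalves (g : lowerHalf n C ⟶ lowerHalf n D)
    (h : upperHalf n C ⟶ upperHalf n D) : lowerMap n (mapOfHalves hC hD g h) = g := by
  simp [lowerMap_eq_incl_comp_comp_proj hD, mapOfHalves, lowerIncl_comp_lowerProj,
    reassoc_of% lowerIncl_comp_lowerProj hC,
    reassoc_of% lowerIncl_comp_upperProj (n := n) (C := C)]

lemma upperMap_mapOfHalves (g : lowerHalf n C ⟶ lowerHalf n D)
    (h : upperHalf n C ⟶ upperHalf n D) : upperMap n (mapOfHalves hC hD g h) = h := by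
  simp [upperMap_eq_incl_comp_comp_proj hC, mapOfHalves, upperIncl_comp_upperProj,
    reassoc_of% upperIncl_comp_upperProj hC, reassoc_of% upperIncl_comp_lowerProj hC]

lemma mapOfHalves_lowerMap_upperMap (f : C ⟶ D) :
    mapOfHalves hC hD (lowerMap n f) (upperMap n f) = f := by
  conv_rhs => rw [← Category.id_comp f, ← Category.comp_id f,
    ← hC.lowerProj_comp_incl_add_upperProj_comp_incl,
    ← hD.lowerProj_comp_incl_add_upperProj_comp_incl]
  simp [mapOfHalves, lowerMap_eq_incl_comp_comp_proj hD, upperMap_eq_incl_comp_comp_proj hC,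
    reassoc_of% lowerIncl_comp_comp_upperProj (n := n) f,
    reassoc_of% upperIncl_comp_comp_lowerProj hC hD f]

lemma mapOfHalves_comp (g : lowerHalf n C ⟶ lowerHalf n D) (h : upperHalf n C ⟶ upperHalf n D)
    (g' : lowerHalf n D ⟶ lowerHalf n E) (h' : upperHalf n D ⟶ upperHalf n E) :
    mapOfHalves hC hD g h ≫ mapOfHalves hD hE g' h' = mapOfHalves hC hE (g ≫ g') (h ≫ h') := by
  simp [mapOfHalves, reassoc_of% lowerIncl_comp_lowerProj hD,
    reassoc_of% upperIncl_comp_upperProj hD,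
    reassoc_of% lowerIncl_comp_upperProj (n := n) (C := D),
    reassoc_of% upperIncl_comp_lowerProj hD]

lemma mapOfHalves_id : mapOfHalves hC hC (𝟙 _) (𝟙 _) = 𝟙 C := by
  simpa [mapOfHalves] using hC.lowerProj_comp_incl_add_upperProj_comp_incl

end MapOfHalves

noncomputable def Homotopy.ofHalves (hC : Splits n C) (hD : Splits n D)
    {g₁ g₂ : lowerHalf n C ⟶ lowerHalf n D} {h₁ h₂ : upperHalf n C ⟶ upperHalf n D}
    (Hg : Homotopy g₁ g₂) (Hh : Homotopy h₁ h₂) :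
    Homotopy (mapOfHalves hC hD g₁ h₁) (mapOfHalves hC hD g₂ h₂) :=
  ((Hg.compRight _).compLeft _).add ((Hh.compRight _).compLeft _)

noncomputable def HomotopyEquiv.ofHalves (hC : Splits n C) (hD : Splits n D)
    (el : HomotopyEquiv (lowerHalf n C) (lowerHalf n D))
    (eu : HomotopyEquiv (upperHalf n C) (upperHalf n D)) : HomotopyEquiv C D where
  hom := mapOfHalves hC hD el.hom eu.hom
  inv := mapOfHalves hD hC el.inv eu.inv
  homotopyHomInvId := by
    simpa only [mapOfHalves_comp, mapOfHalves_id] using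
      Homotopy.ofHalves hC hC el.homotopyHomInvId eu.homotopyHomInvId
  homotopyInvHomId := by
    simpa only [mapOfHalves_comp, mapOfHalves_id] using
      Homotopy.ofHalves hD hD el.homotopyInvHomId eu.homotopyInvHomId

lemma isChainHtpyEquiv_mapOfHalves (hC : Splits n C) (hD : Splits n D)
    {g : lowerHalf n C ⟶ lowerHalf n D} {h : upperHalf n C ⟶ upperHalf n D}
    (hg : IsChainHtpyEquiv g) (hh : IsChainHtpyEquiv h) :
    IsChainHtpyEquiv (mapOfHalves hC hD g h) := by
  obtain ⟨el, rfl⟩ := hg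
  obtain ⟨eu, rfl⟩ := hh
  exact ⟨.ofHalves hC hD el eu, rfl⟩

noncomputable def chEqEquivHalves (hC : Splits n C) (hD : Splits n D) :
    chEq C D ≃ chEq (lowerHalf n C) (lowerHalf n D) × chEq (upperHalf n C) (upperHalf n D) where
  toFun x :=
    (Quotient.map (sa := chEqSetoid C D) (sb := chEqSetoid _ _)
        (fun f => ⟨lowerMap n f.1, isChainHtpyEquiv_lowerMap hC hD f.2⟩)
        (fun _ _ ⟨H⟩ => ⟨H.restrictLower hD⟩) x,
      Quotient.map (sa := chEqSetoid C D) (sb := chEqSetoid _ _)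
        (fun f => ⟨upperMap n f.1, isChainHtpyEquiv_upperMap hC hD f.2⟩)
        (fun _ _ ⟨H⟩ => ⟨H.restrictUpper hC⟩) x)
  invFun p :=
    Quotient.map₂ (sa := chEqSetoid _ _) (sb := chEqSetoid _ _) (sc := chEqSetoid C D)
      (fun g h => ⟨mapOfHalves hC hD g.1 h.1, isChainHtpyEquiv_mapOfHalves hC hD g.2 h.2⟩)
      (fun _ _ ⟨Hg⟩ _ _ ⟨Hh⟩ => ⟨Hg.ofHalves hC hD Hh⟩) p.1 p.2
  left_inv := Quotient.ind fun f =>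
    Quotient.sound ⟨.ofEq (mapOfHalves_lowerMap_upperMap hC hD f.1)⟩
  right_inv := by
    rintro ⟨x, y⟩
    induction x using Quotient.ind
    induction y using Quotient.ind
    exact Prod.ext (Quotient.sound ⟨.ofEq (lowerMap_mapOfHalves hC hD _ _)⟩)
      (Quotient.sound ⟨.ofEq (upperMap_mapOfHalves hC hD _ _)⟩)

end Halves

theorem split_chEq_equiv_general (n : ℕ)
    (C D : ChainComplex (ModuleCat R) ℕ)
    (hC : Splits n C) (hD : Splits n D) :
    (∀ f : C ⟶ D, IsChainHtpyEquiv f →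
        IsChainHtpyEquiv (lowerMap n f) ∧ IsChainHtpyEquiv (upperMap n f)) ∧
    ∃ e : chEq C D ≃ chEq (lowerHalf n C) (lowerHalf n D) × chEq (upperHalf n C) (upperHalf n D),
      ∀ (f : C ⟶ D) (hf : IsChainHtpyEquiv f)
        (hl : IsChainHtpyEquiv (lowerMap n f)) (hu : IsChainHtpyEquiv (upperMap n f)),
        e (Quotient.mk (chEqSetoid C D) ⟨f, hf⟩) =
          (Quotient.mk (chEqSetoid _ _) ⟨lowerMap n f, hl⟩,
            Quotient.mk (chEqSetoid _ _) ⟨upperMap n f, hu⟩) :=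
  ⟨fun _ hf => ⟨isChainHtpyEquiv_lowerMap hC hD hf, isChainHtpyEquiv_upperMap hC hD hf⟩,
    chEqEquivHalves hC hD, fun _ _ _ _ => rfl⟩

/-- For split chain complexes `C` and `D`, sending the chain homotopy class of
a chain homotopy equivalence `f : C ⟶ D` to the pair of the chain homotopy classes of its
restrictions to the lower and upper halves is a well-defined bijection
`chEq(C, D) ≅ chEq(C^ℓ, D^ℓ) × chEq(C^u, D^u)`. -/
theorem split_chEq_equiv (n : ℕ) (hn : 0 < n)
    (C D : ChainComplex (ModuleCat R) ℕ)
    (hCa : IsAdmissible n C) (hDa : IsAdmissible n D)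
    (hC : Splits n C) (hD : Splits n D) :
    (∀ f : C ⟶ D, IsChainHtpyEquiv f →
        IsChainHtpyEquiv (lowerMap n f) ∧ IsChainHtpyEquiv (upperMap n f)) ∧
    ∃ e : chEq C D ≃ chEq (lowerHalf n C) (lowerHalf n D) × chEq (upperHalf n C) (upperHalf n D),
      ∀ (f : C ⟶ D) (hf : IsChainHtpyEquiv f)
        (hl : IsChainHtpyEquiv (lowerMap n f)) (hu : IsChainHtpyEquiv (upperMap n f)),
        e (Quotient.mk (chEqSetoid C D) ⟨f, hf⟩) =
          (Quotient.mk (chEqSetoid _ _) ⟨lowerMap n f, hl⟩,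
            Quotient.mk (chEqSetoid _ _) ⟨upperMap n f, hu⟩) :=
  split_chEq_equiv_general n C D hC hD
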